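/- arXiv:0909.2822 — 6 statements merged into one kernel-verified Lean document; each statement's English description precedes it below -/
import Mathlib

section
/- For every real x, lim_{α→∞} (1 + (2/α)^{1/2} x)^α · e^{-(2α)^{1/2} x} = e^{-x²}, the limit taken over α with 1 + (2/α)^{1/2} x > 0. -/
/-!
With t = √(2/α) one has α = 2/t² and √(2α) = αt, so the expression is
exp(α(log(1 + tx) - tx)) = exp(2(log(1 + tx) - tx)/t²). As α → ∞, t → 0, and the
second-order Taylor bound |log(1 + y) - y + y²/2| ≤ |y|³/(1 - |y|) gives
(log(1 + tx) - tx)/t² → -x²/2.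
-/

open Filter Real Topology

theorem abs_log_one_add_sub_self_add_sq_div_two_le {y : ℝ} (hy : |y| < 1) :
    |log (1 + y) - y + y ^ 2 / 2| ≤ |y| ^ 3 / (1 - |y|) := by
  have h := abs_log_sub_add_sum_range_le (x := -y) (by rwa [abs_neg]) 2
  simp only [Finset.sum_range_succ, Finset.sum_range_zero, abs_neg, sub_neg_eq_add] at h
  convert h using 2
  norm_num
  ring

theorem tendsto_log_one_add_mul_sub_div_sq (x : ℝ) :
    Tendsto (fun t => (log (1 + t * x) - t * x) / t ^ 2) (𝓝[≠] 0) (𝓝 (-x ^ 2 / 2)) := by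
  have hsmall : ∀ᶠ t in 𝓝 (0 : ℝ), |t * x| < 1 := by
    have : Tendsto (fun t : ℝ => |t * x|) (𝓝 0) (𝓝 0) := by
      simpa using ((continuous_mul_const x).abs.tendsto 0)
    exact this.eventually (gt_mem_nhds one_pos)
  have hbound : Tendsto (fun t : ℝ => |t| * |x| ^ 3 / (1 - |t * x|)) (𝓝 0) (𝓝 0) := by
    have : ContinuousAt (fun t : ℝ => |t| * |x| ^ 3 / (1 - |t * x|)) 0 :=
      ContinuousAt.div (by fun_prop) (by fun_prop) (by simp)
    simpa using this.tendsto
  rw [tendsto_iff_norm_sub_tendsto_zero]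
  refine squeeze_zero' (Eventually.of_forall fun _ => norm_nonneg _) ?_
    (hbound.mono_left nhdsWithin_le_nhds)
  filter_upwards [self_mem_nhdsWithin, nhdsWithin_le_nhds hsmall] with t (ht : t ≠ 0) hsmall
  have hrem : (log (1 + t * x) - t * x) / t ^ 2 - -x ^ 2 / 2
      = (log (1 + t * x) - t * x + (t * x) ^ 2 / 2) / t ^ 2 := by
    field_simp
    ring
  have hden : 0 < 1 - |t * x| := by linarith
  rw [Real.norm_eq_abs, hrem, abs_div, abs_of_pos (by positivity : (0 : ℝ) < t ^ 2),
    div_le_iff₀ (by positivity)]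
  calc |log (1 + t * x) - t * x + (t * x) ^ 2 / 2|
      ≤ |t * x| ^ 3 / (1 - |t * x|) := abs_log_one_add_sub_self_add_sq_div_two_le hsmall
    _ = |t| * |x| ^ 3 / (1 - |t * x|) * t ^ 2 := by
      rw [abs_mul, ← sq_abs t]
      ring

theorem tendsto_sqrt_two_div_atTop : Tendsto (fun α : ℝ => √(2 / α)) atTop (𝓝[≠] 0) := by
  refine tendsto_nhdsWithin_iff.2 ⟨?_, ?_⟩
  · have h : Tendsto (fun α : ℝ => 2 / α) atTop (𝓝 0) := tendsto_const_nhds.div_atTop tendsto_id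
    exact sqrt_zero ▸ (continuous_sqrt.tendsto 0).comp h
  · filter_upwards [eventually_gt_atTop 0] with α hα
    exact (sqrt_pos.2 (by positivity)).ne'

theorem sqrt_two_mul_eq_mul_sqrt_two_div {α : ℝ} (hα : 0 ≤ α) : √(2 * α) = α * √(2 / α) := by
  rcases hα.eq_or_lt with rfl | hα
  · simp
  rw [← sqrt_sq hα.le, ← sqrt_mul (sq_nonneg α), sqrt_sq hα.le]
  congr 1
  field_simp

theorem tendsto_mul_log_one_add_sqrt_two_div_sub (x : ℝ) :
    Tendsto (fun α : ℝ => α * (log (1 + √(2 / α) * x) - √(2 / α) * x)) atTop (𝓝 (-x ^ 2)) := by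
  have h := ((tendsto_log_one_add_mul_sub_div_sq x).comp tendsto_sqrt_two_div_atTop).const_mul 2
  rw [show 2 * (-x ^ 2 / 2) = -x ^ 2 by ring] at h
  refine h.congr' ?_
  filter_upwards [eventually_gt_atTop 0] with α hα
  simp only [Function.comp_apply, sq_sqrt (by positivity : (0 : ℝ) ≤ 2 / α)]
  field_simp

theorem stmt2 (x : ℝ) :
    Tendsto (fun α : ℝ => (1 + Real.sqrt (2 / α) * x) ^ α * Real.exp (-(Real.sqrt (2 * α) * x)))
      (atTop ⊓ 𝓟 {α : ℝ | 0 < α ∧ 0 < 1 + Real.sqrt (2 / α) * x})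
      (nhds (Real.exp (-x ^ 2))) := by
  refine (((continuous_exp.tendsto _).comp (tendsto_mul_log_one_add_sqrt_two_div_sub x)).mono_left
    inf_le_left).congr' ?_
  filter_upwards [mem_inf_of_right (mem_principal_self _)] with α ⟨hα, hbase⟩
  rw [Function.comp_apply, rpow_def_of_pos hbase, sqrt_two_mul_eq_mul_sqrt_two_div hα.le,
    ← exp_add]
  ring_nf
end

section
/- For all real x with -（α/2)^{1/2} < x ≤ 0 and α > 0, one has (1 + (2/α)^{1/2} x)^α e^{-(2α)^{1/2} x} ≤ e^{-x²}. -/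
open Real

/-!
With `t = √(2/α) x ∈ (-1, 0]` the inequality becomes `α (log (1 + t) - t) ≤ -α t² / 2`.
For `t ∈ (-1, 0]` every term of the series `-log (1 + t) = ∑ (-t)ⁿ / n` is nonnegative, so
truncating it after two terms gives `log (1 + t) ≤ t - t² / 2`.
-/

theorem log_one_add_le_sub_sq_div_two {t : ℝ} (ht₁ : -1 < t) (ht₀ : t ≤ 0) :
    log (1 + t) ≤ t - t ^ 2 / 2 := by
  have hs : 0 ≤ -t := by linarith
  have hsum := hasSum_pow_div_log_of_abs_lt_one (x := -t) (by rw [abs_of_nonneg hs]; linarith)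
  rw [sub_neg_eq_add] at hsum
  have htrunc := sum_le_hasSum (Finset.range 2)
    (fun n _ => div_nonneg (pow_nonneg hs _) (by positivity)) hsum
  norm_num [Finset.sum_range_succ] at htrunc
  linarith

theorem rpow_mul_exp_neg_le_exp {α t : ℝ} (hα : 0 ≤ α) (ht₁ : -1 < t) (ht₀ : t ≤ 0) :
    (1 + t) ^ α * exp (-(α * t)) ≤ exp (-(α * t ^ 2 / 2)) := by
  rw [rpow_def_of_pos (by linarith), ← exp_add, exp_le_exp]
  nlinarith [mul_le_mul_of_nonneg_left (log_one_add_le_sub_sq_div_two ht₁ ht₀) hα]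

theorem stmt5 (α x : ℝ) (hα : 0 < α) (hx1 : -Real.sqrt (α / 2) < x) (hx2 : x ≤ 0) :
    (1 + Real.sqrt (2 / α) * x) ^ α * Real.exp (-(Real.sqrt (2 * α) * x)) ≤
      Real.exp (-x ^ 2) := by
  have hc : 0 < sqrt (2 / α) := sqrt_pos.mpr (by positivity)
  have hsq : sqrt (2 / α) ^ 2 = 2 / α := sq_sqrt (by positivity)
  have hinv : sqrt (2 / α) * sqrt (α / 2) = 1 := by
    rw [← sqrt_mul (by positivity), div_mul_div_comm, mul_comm 2 α, div_self (by positivity),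
      sqrt_one]
  have hscale : sqrt (2 * α) = α * sqrt (2 / α) := by
    rw [show 2 * α = α ^ 2 * (2 / α) by field_simp, sqrt_mul (sq_nonneg α), sqrt_sq hα.le]
  have ht₁ : -1 < sqrt (2 / α) * x := by nlinarith
  have ht₀ : sqrt (2 / α) * x ≤ 0 := mul_nonpos_of_nonneg_of_nonpos hc.le hx2
  convert rpow_mul_exp_neg_le_exp hα.le ht₁ ht₀ using 3
  · rw [hscale]; ring
  · rw [mul_pow, hsq]; field_simp
end

section
/- For all x ≥ 0 and α ≥ 1/2, one has (1 + (2/α)^{1/2} x)^α e^{-(2α)^{1/2} x} ≤ (1 + 2x) e^{-x}. -/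
/-! Put `β = √(2α) ≥ 1` and `y = 2x/β`, so that `α = β²/2` and `βy = 2x`. Taking logarithms, and
writing `h s = s - log (1 + s)`, the claim follows from `h (βy) ≤ β² h y` (plus `log (1 + 2x) ≥ 0`).
That inequality says that `h s / s²` is antitone on `(0, ∞)`; its derivative has the sign of
`2 log (1 + s) - (1 + s) + (1 + s)⁻¹`, which is `≤ 0` because `log v ≤ sinh (log v)` for `v ≥ 1`. -/

open Real Set

namespace Real

lemma two_mul_log_le_sub_inv {v : ℝ} (hv : 1 ≤ v) : 2 * log v ≤ v - v⁻¹ := by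
  have h := self_le_sinh_iff.2 (log_nonneg hv)
  rw [sinh_log (by linarith)] at h
  linarith

lemma hasDerivAt_sub_log_one_add_div_sq {s : ℝ} (hs : 0 < s) :
    HasDerivAt (fun s => (s - log (1 + s)) / s ^ 2)
      ((s / (1 + s) * s - 2 * (s - log (1 + s))) / s ^ 3) s := by
  have h1s : 1 + s ≠ 0 := by positivity
  have hnum : HasDerivAt (fun s => s - log (1 + s)) (1 - 1 / (1 + s)) s :=
    (hasDerivAt_id s).sub (((hasDerivAt_id s).const_add 1).log h1s)
  refine (hnum.div (hasDerivAt_pow 2 s) (by positivity)).congr_deriv ?_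
  field_simp
  ring

lemma antitoneOn_sub_log_one_add_div_sq :
    AntitoneOn (fun s => (s - log (1 + s)) / s ^ 2) (Ioi 0) := by
  refine antitoneOn_of_deriv_nonpos (convex_Ioi 0) ?_ ?_ ?_
  · exact fun s hs => (hasDerivAt_sub_log_one_add_div_sq hs).continuousAt.continuousWithinAt
  · rw [interior_Ioi]
    exact fun s hs => (hasDerivAt_sub_log_one_add_div_sq hs).differentiableAt.differentiableWithinAt
  · rw [interior_Ioi]
    intro s (hs : 0 < s)
    rw [(hasDerivAt_sub_log_one_add_div_sq hs).deriv]
    have hlog := two_mul_log_le_sub_inv (v := 1 + s) (by linarith)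
    have hsub : 1 + s - (1 + s)⁻¹ = 2 * s - s / (1 + s) * s := by field_simp; ring
    exact div_nonpos_of_nonpos_of_nonneg (by linarith) (by positivity)

lemma mul_sub_log_one_add_mul_le {β y : ℝ} (hβ : 1 ≤ β) (hy : 0 ≤ y) :
    β * y - log (1 + β * y) ≤ β ^ 2 * (y - log (1 + y)) := by
  rcases hy.eq_or_lt with rfl | hy_pos
  · simp
  have hβy : 0 < β * y := by positivity
  have h := antitoneOn_sub_log_one_add_div_sq hy_pos hβy (le_mul_of_one_le_left hy hβ)
  rw [div_le_div_iff₀ (by positivity) (by positivity), mul_pow] at h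
  exact le_of_mul_le_mul_right (by linarith) (by positivity : 0 < y ^ 2)

end Real

theorem stmt6 (α x : ℝ) (hα : (1 : ℝ) / 2 ≤ α) (hx : 0 ≤ x) :
    (1 + Real.sqrt (2 / α) * x) ^ α * Real.exp (-(Real.sqrt (2 * α) * x)) ≤
      (1 + 2 * x) * Real.exp (-x) := by
  set β := √(2 * α)
  have hβ1 : 1 ≤ β := one_le_sqrt.2 (by linarith)
  have hβ0 : 0 < β := by linarith
  have hβsq : β ^ 2 = 2 * α := sq_sqrt (by linarith)
  have hsqrt : √(2 / α) = 2 / β := by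
    rw [← sqrt_sq (by positivity : 0 ≤ 2 / β), div_pow, hβsq]
    congr 1
    field_simp
  set y := 2 * x / β with hy_def
  have hy : 0 ≤ y := by positivity
  have hβy : β * y = 2 * x := mul_div_cancel₀ _ hβ0.ne'
  have hlhs : (1 + 2 / β * x) ^ α * exp (-(β * x)) = exp (α * log (1 + y) - β * x) := by
    rw [hy_def, rpow_def_of_pos (by positivity), ← exp_add, div_mul_eq_mul_div]
    congr 1
    ring
  have hrhs : (1 + 2 * x) * exp (-x) = exp (log (1 + 2 * x) - x) := by
    rw [exp_sub, exp_log (by linarith), exp_neg, div_eq_mul_inv]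
  rw [hsqrt, hlhs, hrhs, exp_le_exp]
  have hmain := mul_sub_log_one_add_mul_le hβ1 hy
  rw [hβy] at hmain
  have hlog : 0 ≤ log (1 + 2 * x) := log_nonneg (by linarith)
  have hβx : β * x = β ^ 2 * y / 2 := by linear_combination (-β / 2) * hβy
  rw [hβx, show α = β ^ 2 / 2 by linarith]
  linarith
end

section
/- Let h_n be the polynomials defined by h_0 = 1, h_1(x) = x, and x h_n(x) = h_{n+1}(x) + (n/2) h_{n-1}(x) (monic Hermite), and let ℓ_n^α be defined by ℓ_0^α = 1 and x ℓ_n^α(x) = ℓ_{n+1}^α(x) + (2n+α+1) ℓ_n^α(x) + n(n+α) ℓ_{n-1}^α(x) (monic Laguerre). Then for every n and every real x, lim_{α→∞} (2α)^{-n/2} ℓ_n^α((2α)^{1/2} x + α) = h_n(x). -/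
/-!
After the substitution `y = √(2α) x + α` and the rescaling by `(2α)^{-n/2}`, the Laguerre
recurrence becomes `u_{n+2} = (x - (2n+3)/√(2α)) u_{n+1} - ((n+1)²/(2α) + (n+1)/2) u_n`.
As `α → ∞` its coefficients tend to those of the Hermite recurrence
`h_{n+2} = x h_{n+1} - ((n+1)/2) h_n`, and the initial terms `u₀ = 1`, `u₁ = x - 1/√(2α)` tend
to `h₀ = 1`, `h₁ = x`; continuity of ring operations then propagates the limits along the
recurrence.
-/

open Filter Real
open scoped Topology

lemma rpow_neg_natCast_div_two_eq_inv_sqrt_pow {a : ℝ} (ha : 0 ≤ a) (k : ℕ) :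
    a ^ (-(k : ℝ) / 2) = (√a)⁻¹ ^ k := by
  rw [neg_div, rpow_neg ha, inv_pow, sqrt_eq_rpow, ← rpow_natCast, ← rpow_mul ha]
  ring_nf

lemma tendsto_inv_sqrt_two_mul_atTop : Tendsto (fun α : ℝ => (√(2 * α))⁻¹) atTop (𝓝 0) :=
  (tendsto_sqrt_atTop.comp (tendsto_id.const_mul_atTop two_pos)).inv_tendsto_atTop

lemma tendsto_inv_two_mul_atTop : Tendsto (fun α : ℝ => (2 * α)⁻¹) atTop (𝓝 0) :=
  (tendsto_id.const_mul_atTop two_pos).inv_tendsto_atTop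

theorem tendsto_of_threeTermRecurrence {ι R : Type*} [Ring R] [TopologicalSpace R]
    [IsTopologicalRing R] {F : Filter ι} {u a b : ℕ → ι → R} {v A B : ℕ → R}
    (ha : ∀ n, Tendsto (a n) F (𝓝 (A n))) (hb : ∀ n, Tendsto (b n) F (𝓝 (B n)))
    (hu : ∀ n, ∀ᶠ t in F, u (n + 2) t = a n t * u (n + 1) t - b n t * u n t)
    (hv : ∀ n, v (n + 2) = A n * v (n + 1) - B n * v n)
    (h0 : Tendsto (u 0) F (𝓝 (v 0))) (h1 : Tendsto (u 1) F (𝓝 (v 1))) :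
    ∀ n, Tendsto (u n) F (𝓝 (v n)) := by
  intro n
  induction n using Nat.twoStepInduction with
  | zero => exact h0
  | one => exact h1
  | more n ih0 ih1 =>
    rw [hv]
    refine (((ha n).mul ih1).sub ((hb n).mul ih0)).congr' ?_
    filter_upwards [hu n] with t ht using ht.symm

section Laguerre

variable (l : ℝ → ℕ → ℝ → ℝ) (x : ℝ)

/-- `(2α)^{-n/2} ℓ_n^α(√(2α) x + α)`, with the power written as `(√(2α))⁻¹ ^ n`. -/
noncomputable def rescaledLaguerre (n : ℕ) (α : ℝ) : ℝ :=
  (√(2 * α))⁻¹ ^ n * l α n (√(2 * α) * x + α)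

variable {l}

lemma rescaledLaguerre_zero (hl0 : ∀ α y : ℝ, l α 0 y = 1) (α : ℝ) :
    rescaledLaguerre l x 0 α = 1 := by
  simp [rescaledLaguerre, hl0]

lemma rescaledLaguerre_one (hl0 : ∀ α y : ℝ, l α 0 y = 1)
    (hlrec0 : ∀ α y : ℝ, y * l α 0 y = l α 1 y + (α + 1) * l α 0 y) {α : ℝ} (hα : 0 < α) :
    rescaledLaguerre l x 1 α = x - (√(2 * α))⁻¹ := by
  have hS : √(2 * α) ≠ 0 := (sqrt_pos.2 (by positivity)).ne'
  have hl1 := hlrec0 α (√(2 * α) * x + α)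
  rw [hl0] at hl1
  rw [rescaledLaguerre, pow_one, show l α 1 (√(2 * α) * x + α) = √(2 * α) * x - 1 by linarith]
  field_simp

lemma inv_pow_mul_eq_of_laguerre_recurrence {S a c x L₀ L₁ L₂ : ℝ} (hS : S ≠ 0)
    (hS2 : S ^ 2 = 2 * a)
    (hrec : (S * x + a) * L₁ = L₂ + (2 * c + a + 1) * L₁ + c * (c + a) * L₀) (n : ℕ) :
    S⁻¹ ^ (n + 2) * L₂ = (x - (2 * c + 1) * S⁻¹) * (S⁻¹ ^ (n + 1) * L₁)
      - (c ^ 2 * (2 * a)⁻¹ + c / 2) * (S⁻¹ ^ n * L₀) := by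
  obtain rfl : a = S ^ 2 / 2 := by linarith
  obtain rfl : L₂ = (S * x + S ^ 2 / 2) * L₁ - (2 * c + S ^ 2 / 2 + 1) * L₁
      - c * (c + S ^ 2 / 2) * L₀ := by linarith
  rw [pow_succ, pow_succ]
  field_simp
  ring

lemma rescaledLaguerre_add_two (hlrec : ∀ (α : ℝ) (n : ℕ), 1 ≤ n → ∀ y : ℝ,
      y * l α n y = l α (n + 1) y + (2 * n + α + 1) * l α n y
        + (n : ℝ) * ((n : ℝ) + α) * l α (n - 1) y) {α : ℝ} (hα : 0 < α) (n : ℕ) :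
    rescaledLaguerre l x (n + 2) α =
      (x - (2 * (n + 1) + 1) * (√(2 * α))⁻¹) * rescaledLaguerre l x (n + 1) α
        - ((n + 1) ^ 2 * (2 * α)⁻¹ + (n + 1) / 2) * rescaledLaguerre l x n α := by
  have h2α : 0 < 2 * α := by positivity
  refine inv_pow_mul_eq_of_laguerre_recurrence (sqrt_pos.2 h2α).ne' (sq_sqrt h2α.le) ?_ n
  simpa [add_assoc] using hlrec α (n + 1) n.succ_pos _

end Laguerre

theorem stmt10 (h : ℕ → ℝ → ℝ) (l : ℝ → ℕ → ℝ → ℝ)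
    (hh0 : ∀ x : ℝ, h 0 x = 1)
    (hh1 : ∀ x : ℝ, h 1 x = x)
    (hhrec : ∀ n : ℕ, 1 ≤ n → ∀ x : ℝ,
      x * h n x = h (n + 1) x + ((n : ℝ) / 2) * h (n - 1) x)
    (hl0 : ∀ (α : ℝ) (x : ℝ), l α 0 x = 1)
    (hlrec0 : ∀ (α : ℝ) (x : ℝ), x * l α 0 x = l α 1 x + (α + 1) * l α 0 x)
    (hlrec : ∀ (α : ℝ) (n : ℕ), 1 ≤ n → ∀ x : ℝ,
      x * l α n x = l α (n + 1) x + (2 * n + α + 1) * l α n x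
        + (n : ℝ) * ((n : ℝ) + α) * l α (n - 1) x) :
    ∀ (n : ℕ) (x : ℝ),
      Tendsto (fun α : ℝ => (2 * α) ^ (-(n : ℝ) / 2) * l α n (Real.sqrt (2 * α) * x + α))
        atTop (nhds (h n x)) := by
  intro n x
  have hpos : ∀ᶠ α : ℝ in atTop, 0 < α := eventually_gt_atTop 0
  have hermite_step (n : ℕ) : h (n + 2) x = x * h (n + 1) x - (n + 1) / 2 * h n x := by
    have := hhrec (n + 1) n.succ_pos x
    push_cast [Nat.add_sub_cancel] at this
    linarith
  have hlim := tendsto_of_threeTermRecurrence (u := rescaledLaguerre l x) (v := (h · x))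
    (fun n => by simpa using (tendsto_inv_sqrt_two_mul_atTop.const_mul _).const_sub x)
    (fun n => by simpa using (tendsto_inv_two_mul_atTop.const_mul _).add_const ((n + 1 : ℝ) / 2))
    (fun n => hpos.mono fun α hα => rescaledLaguerre_add_two x hlrec hα n) hermite_step
    (by rw [hh0, funext (rescaledLaguerre_zero x hl0)]; exact tendsto_const_nhds)
    (by
      rw [hh1]
      have hlim₁ : Tendsto (fun α : ℝ => x - (√(2 * α))⁻¹) atTop (𝓝 x) := by
        simpa using tendsto_inv_sqrt_two_mul_atTop.const_sub x
      exact hlim₁.congr' (hpos.mono fun α hα => (rescaledLaguerre_one x hl0 hlrec0 hα).symm))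
    n
  refine hlim.congr' ?_
  filter_upwards [hpos] with α hα
  rw [rescaledLaguerre, rpow_neg_natCast_div_two_eq_inv_sqrt_pow (by positivity)]
end

section
/- For monic continuous dual Hahn polynomials s_n(x;a,b,c), defined by the recurrence x s_n(x) = s_{n+1}(x) + (A_n + C_n − a²) s_n(x) + A_{n-1} C_n s_{n-1}(x) with A_n = (n+a+b)(n+a+c) and C_n = n(n+b+c−1), and monic Laguerre polynomials ℓ_n^α defined by x ℓ_n^α(x) = ℓ_{n+1}^α(x) + (2n+α+1) ℓ_n^α(x) + n(n+α) ℓ_{n-1}^α(x), one has for all real a, b with a+b > 0, all n, and all real x: lim_{c→∞} c^{-n} s_n(c x; a, b, c) = ℓ_n^{a+b−1}(x). -/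
/-!
Put `f n c = s_n(c x; a, b, c) / c ^ n`. Dividing the recurrence of `s_n` at the point `c x` by
`c ^ (n + 1)` gives `f (n + 1) = (x - B_n(c) / c) f n - (D_n(c) / c²) f (n - 1)`, where `B_n` and
`D_n` are polynomials in `c` of degrees one and two. Their normalised coefficients tend to
`2n + a + b` and `n (n + a + b - 1)`, which are exactly the Laguerre coefficients for
`α = a + b - 1`, so the limits of `f n` satisfy the Laguerre recurrence.
-/

open Filter Topology

theorem Filter.Tendsto.of_three_term_recurrence {α R : Type*} [TopologicalSpace R]
    [Add R] [Mul R] [ContinuousAdd R] [ContinuousMul R] {l : Filter α} {f : ℕ → α → R}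
    {g : ℕ → R} {p q : ℕ → α → R} {P Q : ℕ → R}
    (h0 : Tendsto (f 0) l (𝓝 (g 0))) (h1 : Tendsto (f 1) l (𝓝 (g 1)))
    (hp : ∀ n, Tendsto (p n) l (𝓝 (P n))) (hq : ∀ n, Tendsto (q n) l (𝓝 (Q n)))
    (hf : ∀ n, ∀ᶠ c in l, f (n + 2) c = p n c * f (n + 1) c + q n c * f n c)
    (hg : ∀ n, g (n + 2) = P n * g (n + 1) + Q n * g n) :
    ∀ n, Tendsto (f n) l (𝓝 (g n)) := by
  intro n
  induction n using Nat.twoStepInduction with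
  | zero => exact h0
  | one => exact h1
  | more n ihn ihn1 =>
    rw [hg]
    exact (((hp n).mul ihn1).add ((hq n).mul ihn)).congr' (by
      filter_upwards [hf n] with c hc using hc.symm)

theorem tendsto_add_mul_div_atTop (p q : ℝ) :
    Tendsto (fun c : ℝ => (p + q * c) / c) atTop (𝓝 q) := by
  have h : Tendsto (fun c : ℝ => p / c + q) atTop (𝓝 (0 + q)) :=
    (tendsto_const_nhds.div_atTop tendsto_id).add tendsto_const_nhds
  rw [zero_add] at h
  refine h.congr' ?_
  filter_upwards [eventually_ne_atTop 0] with c hc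
  field_simp

section ContinuousDualHahn

variable (a b m : ℝ)

theorem tendsto_dualHahn_diag_coeff_div :
    Tendsto (fun c : ℝ => ((m + a + b) * (m + a + c) + m * (m + b + c - 1) - a ^ 2) / c) atTop
      (𝓝 (2 * m + (a + b - 1) + 1)) := by
  convert tendsto_add_mul_div_atTop ((m + a + b) * (m + a) + m * (m + b - 1) - a ^ 2)
    (2 * m + a + b) using 2 <;> ring

theorem tendsto_dualHahn_offdiag_coeff_div_sq :
    Tendsto (fun c : ℝ => (m - 1 + a + b) * (m - 1 + a + c) * (m * (m + b + c - 1)) / c ^ 2)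
      atTop (𝓝 (m * (m + (a + b - 1)))) := by
  have h := ((tendsto_add_mul_div_atTop (m - 1 + a) 1).const_mul (m - 1 + a + b)).mul
    ((tendsto_add_mul_div_atTop (m + b - 1) 1).const_mul m)
  convert h using 1
  · ext c
    field_simp
    ring
  · ring_nf

end ContinuousDualHahn

theorem stmt18_general (a b : ℝ)
    (s : ℝ → ℕ → ℝ → ℝ) (l : ℝ → ℕ → ℝ → ℝ)
    (hs0 : ∀ (c : ℝ) (x : ℝ), s c 0 x = 1)
    (hsrec0 : ∀ (c : ℝ) (x : ℝ),
      x * s c 0 x = s c 1 x + ((a + b) * (a + c) - a ^ 2) * s c 0 x)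
    (hsrec : ∀ (c : ℝ) (n : ℕ), 1 ≤ n → ∀ x : ℝ,
      x * s c n x = s c (n + 1) x
        + (((n : ℝ) + a + b) * ((n : ℝ) + a + c) + (n : ℝ) * ((n : ℝ) + b + c - 1) - a ^ 2)
            * s c n x
        + (((n : ℝ) - 1 + a + b) * ((n : ℝ) - 1 + a + c)) * ((n : ℝ) * ((n : ℝ) + b + c - 1))
            * s c (n - 1) x)
    (hl0 : ∀ (α : ℝ) (x : ℝ), l α 0 x = 1)
    (hlrec0 : ∀ (α : ℝ) (x : ℝ), x * l α 0 x = l α 1 x + (α + 1) * l α 0 x)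
    (hlrec : ∀ (α : ℝ) (n : ℕ), 1 ≤ n → ∀ x : ℝ,
      x * l α n x = l α (n + 1) x + (2 * n + α + 1) * l α n x
        + (n : ℝ) * ((n : ℝ) + α) * l α (n - 1) x) :
    ∀ (n : ℕ) (x : ℝ),
      Tendsto (fun c : ℝ => s c n (c * x) / c ^ n) atTop
        (nhds (l (a + b - 1) n x)) := by
  intro n x
  refine Tendsto.of_three_term_recurrence (f := fun n c => s c n (c * x) / c ^ n)
    (g := fun n => l (a + b - 1) n x)
    (P := fun n => x - (2 * ((n + 1 : ℕ) : ℝ) + (a + b - 1) + 1))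
    (Q := fun n => -(((n + 1 : ℕ) : ℝ) * (((n + 1 : ℕ) : ℝ) + (a + b - 1)))) ?zero ?one
    (fun n => tendsto_const_nhds.sub (tendsto_dualHahn_diag_coeff_div a b _))
    (fun n => (tendsto_dualHahn_offdiag_coeff_div_sq a b _).neg) ?rec_s ?rec_l n
  case zero => simp [hs0, hl0]
  case one =>
    -- `s_1` also obeys the general recurrence with `n = 0`, so the `m = 0` coefficient applies.
    have hl1 : l (a + b - 1) 1 x = x - (2 * 0 + (a + b - 1) + 1) := by
      linear_combination -hlrec0 (a + b - 1) x + (x - (a + b)) * hl0 (a + b - 1) x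
    rw [hl1]
    refine (tendsto_const_nhds.sub (tendsto_dualHahn_diag_coeff_div a b 0)).congr' ?_
    filter_upwards [eventually_ne_atTop 0] with c hc
    have hs1 := hsrec0 c (c * x)
    rw [hs0] at hs1
    field_simp
    rw [mul_comm x c]
    linear_combination hs1
  case rec_s =>
    intro n
    filter_upwards [eventually_ne_atTop 0] with c hc
    have h := hsrec c (n + 1) n.succ_pos (c * x)
    rw [Nat.add_sub_cancel] at h
    field_simp
    linear_combination (-(c ^ (n + 2) * c * c ^ n)) * h
  case rec_l =>
    intro n
    have h := hlrec (a + b - 1) (n + 1) n.succ_pos x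
    rw [Nat.add_sub_cancel] at h
    linear_combination -h

theorem stmt18 (a b : ℝ) (hab : 0 < a + b)
    (s : ℝ → ℕ → ℝ → ℝ) (l : ℝ → ℕ → ℝ → ℝ)
    (hs0 : ∀ (c : ℝ) (x : ℝ), s c 0 x = 1)
    (hsrec0 : ∀ (c : ℝ) (x : ℝ),
      x * s c 0 x = s c 1 x + ((a + b) * (a + c) - a ^ 2) * s c 0 x)
    (hsrec : ∀ (c : ℝ) (n : ℕ), 1 ≤ n → ∀ x : ℝ,
      x * s c n x = s c (n + 1) x
        + (((n : ℝ) + a + b) * ((n : ℝ) + a + c) + (n : ℝ) * ((n : ℝ) + b + c - 1) - a ^ 2)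
            * s c n x
        + (((n : ℝ) - 1 + a + b) * ((n : ℝ) - 1 + a + c)) * ((n : ℝ) * ((n : ℝ) + b + c - 1))
            * s c (n - 1) x)
    (hl0 : ∀ (α : ℝ) (x : ℝ), l α 0 x = 1)
    (hlrec0 : ∀ (α : ℝ) (x : ℝ), x * l α 0 x = l α 1 x + (α + 1) * l α 0 x)
    (hlrec : ∀ (α : ℝ) (n : ℕ), 1 ≤ n → ∀ x : ℝ,
      x * l α n x = l α (n + 1) x + (2 * n + α + 1) * l α n x
        + (n : ℝ) * ((n : ℝ) + α) * l α (n - 1) x) :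
    ∀ (n : ℕ) (x : ℝ),
      Tendsto (fun c : ℝ => s c n (c * x) / c ^ n) atTop
        (nhds (l (a + b - 1) n x)) :=
  stmt18_general a b s l hs0 hsrec0 hsrec hl0 hlrec0 hlrec
end

section
/- The map (s₁,s₂,s₃,s₄) ↦ (t₁,t₂,t₃,t₄) given by t₁ = s₁s₂/(1+s₁), t₂ = s₂s₃s₄, t₃ = (1+s₁)/(s₂(1+s₁+s₁s₂²s₄)), t₄ = s₂/s₃ is a bijection from {(s₁,s₂,s₃,s₄) : s₁ ≥ 0, s₂ > 0, s₃ > 0, s₄ ≥ 0, s₂²s₄ < 1} onto {(t₁,t₂,t₃,t₄) : t₁ ≥ 0, t₂ ≥ 0, t₃ > 0, t₄ > 0, t₁t₃(1+t₂t₄) < 1, t₂t₄ < 1}, with inverse s₁ = t₁t₃/(1−t₁t₃−t₁t₂t₃t₄), s₂ = (1−t₁t₂t₃t₄)/t₃, s₃ = (1−t₁t₂t₃t₄)/(t₃t₄), s₄ = t₂t₃²t₄/(1−t₁t₂t₃t₄)². -/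
/-- The domain in the `s`-coordinates. -/
def Sset : Set (ℝ × ℝ × ℝ × ℝ) :=
  {s | 0 ≤ s.1 ∧ 0 < s.2.1 ∧ 0 < s.2.2.1 ∧ 0 ≤ s.2.2.2 ∧ s.2.1 ^ 2 * s.2.2.2 < 1}

/-- The codomain in the `t`-coordinates. -/
def Tset : Set (ℝ × ℝ × ℝ × ℝ) :=
  {t | 0 ≤ t.1 ∧ 0 ≤ t.2.1 ∧ 0 < t.2.2.1 ∧ 0 < t.2.2.2 ∧
    t.1 * t.2.2.1 * (1 + t.2.1 * t.2.2.2) < 1 ∧ t.2.1 * t.2.2.2 < 1}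

/-- The coordinate change `s ↦ t`. -/
noncomputable def sToT (s : ℝ × ℝ × ℝ × ℝ) : ℝ × ℝ × ℝ × ℝ :=
  ⟨s.1 * s.2.1 / (1 + s.1),
   s.2.1 * s.2.2.1 * s.2.2.2,
   (1 + s.1) / (s.2.1 * (1 + s.1 + s.1 * s.2.1 ^ 2 * s.2.2.2)),
   s.2.1 / s.2.2.1⟩

/-- The coordinate change `t ↦ s`. -/
noncomputable def tToS (t : ℝ × ℝ × ℝ × ℝ) : ℝ × ℝ × ℝ × ℝ :=
  ⟨t.1 * t.2.2.1 / (1 - t.1 * t.2.2.1 - t.1 * t.2.1 * t.2.2.1 * t.2.2.2),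
   (1 - t.1 * t.2.1 * t.2.2.1 * t.2.2.2) / t.2.2.1,
   (1 - t.1 * t.2.1 * t.2.2.1 * t.2.2.2) / (t.2.2.1 * t.2.2.2),
   t.2.1 * t.2.2.1 ^ 2 * t.2.2.2 / (1 - t.1 * t.2.1 * t.2.2.1 * t.2.2.2) ^ 2⟩


/-! Write `E = 1 + s₁ + s₁s₂²s₄` for a point `s` of the domain. Its image `t` satisfies
`t₁t₃ = s₁/E` and `t₂t₄ = s₂²s₄`, hence `1 - t₁t₂t₃t₄ = (1 + s₁)/E` and
`1 - t₁t₃(1 + t₂t₄) = 1/E`. Conversely the image `s` of a point `t` of the codomain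
satisfies `s₂²s₄ = t₂t₄` and `E = 1/(1 - t₁t₃(1 + t₂t₄))`. Both inequality systems and
both composites reduce to these identities. -/

lemma sToT_fst_mul_thd (s : ℝ × ℝ × ℝ × ℝ) (hs₁ : 1 + s.1 ≠ 0) (hs₂ : s.2.1 ≠ 0) :
    (sToT s).1 * (sToT s).2.2.1 = s.1 / (1 + s.1 + s.1 * s.2.1 ^ 2 * s.2.2.2) := by
  simp only [sToT]
  rw [div_mul_div_comm, mul_comm (1 + s.1), mul_div_mul_right _ _ hs₁,
    mul_comm s.1 s.2.1, mul_div_mul_left _ _ hs₂]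

lemma sToT_snd_mul_fth (s : ℝ × ℝ × ℝ × ℝ) (hs₃ : s.2.2.1 ≠ 0) :
    (sToT s).2.1 * (sToT s).2.2.2 = s.2.1 ^ 2 * s.2.2.2 := by
  simp only [sToT]
  field_simp

lemma tToS_eq (t : ℝ × ℝ × ℝ × ℝ) :
    tToS t =
      (t.1 * t.2.2.1 / (1 - t.1 * t.2.2.1 - t.1 * t.2.2.1 * (t.2.1 * t.2.2.2)),
       (1 - t.1 * t.2.2.1 * (t.2.1 * t.2.2.2)) / t.2.2.1,
       (1 - t.1 * t.2.2.1 * (t.2.1 * t.2.2.2)) / (t.2.2.1 * t.2.2.2),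
       t.2.1 * t.2.2.2 * t.2.2.1 ^ 2 / (1 - t.1 * t.2.2.1 * (t.2.1 * t.2.2.2)) ^ 2) := by
  simp only [tToS]
  ext <;> ring_nf

lemma sToT_eq (s : ℝ × ℝ × ℝ × ℝ) :
    sToT s =
      (s.1 * s.2.1 / (1 + s.1),
       s.2.1 * s.2.2.1 * s.2.2.2,
       (1 + s.1) / (s.2.1 * (1 + s.1 + s.1 * (s.2.1 ^ 2 * s.2.2.2))),
       s.2.1 / s.2.2.1) := by
  simp only [sToT, mul_assoc]

lemma tToS_snd_sq_mul_fth (t : ℝ × ℝ × ℝ × ℝ) (ht₃ : t.2.2.1 ≠ 0)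
    (hD : 1 - t.1 * t.2.1 * t.2.2.1 * t.2.2.2 ≠ 0) :
    (tToS t).2.1 ^ 2 * (tToS t).2.2.2 = t.2.1 * t.2.2.2 := by
  simp only [tToS]
  field_simp

lemma tToS_one_add_fst (t : ℝ × ℝ × ℝ × ℝ)
    (hF : 1 - t.1 * t.2.2.1 - t.1 * t.2.1 * t.2.2.1 * t.2.2.2 ≠ 0) :
    1 + (tToS t).1 =
      (1 - t.1 * t.2.1 * t.2.2.1 * t.2.2.2) /
        (1 - t.1 * t.2.2.1 - t.1 * t.2.1 * t.2.2.1 * t.2.2.2) := by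
  simp only [tToS]
  rw [one_add_div hF]
  ring

lemma tToS_denom (t : ℝ × ℝ × ℝ × ℝ)
    (ht₃ : t.2.2.1 ≠ 0) (hD : 1 - t.1 * t.2.1 * t.2.2.1 * t.2.2.2 ≠ 0)
    (hF : 1 - t.1 * t.2.2.1 - t.1 * t.2.1 * t.2.2.1 * t.2.2.2 ≠ 0) :
    1 + (tToS t).1 + (tToS t).1 * ((tToS t).2.1 ^ 2 * (tToS t).2.2.2) =
      1 / (1 - t.1 * t.2.2.1 - t.1 * t.2.1 * t.2.2.1 * t.2.2.2) := by
  rw [tToS_snd_sq_mul_fth t ht₃ hD, tToS_one_add_fst t hF]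
  simp only [tToS]
  field_simp
  ring

lemma pos_of_mem_Tset {t : ℝ × ℝ × ℝ × ℝ} (ht : t ∈ Tset) :
    0 < 1 - t.1 * t.2.2.1 - t.1 * t.2.1 * t.2.2.1 * t.2.2.2 ∧
      0 < 1 - t.1 * t.2.1 * t.2.2.1 * t.2.2.2 := by
  obtain ⟨h₁, -, h₃, -, hF, -⟩ := ht
  constructor <;> nlinarith [mul_nonneg h₁ h₃.le]

theorem sToT_mapsTo : Set.MapsTo sToT Sset Tset := by
  rintro s ⟨ha, hb, hc, hd, hbd⟩
  have hE : 0 < 1 + s.1 + s.1 * s.2.1 ^ 2 * s.2.2.2 := by positivity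
  have h₂₄ := sToT_snd_mul_fth s hc.ne'
  refine ⟨?_, ?_, ?_, ?_, ?_, h₂₄ ▸ hbd⟩
  iterate 4 (simp only [sToT]; positivity)
  rw [sToT_fst_mul_thd s (by positivity) hb.ne', h₂₄, div_mul_eq_mul_div, div_lt_one hE]
  linarith

theorem tToS_mapsTo : Set.MapsTo tToS Tset Sset := by
  intro t ht
  obtain ⟨hF, hD⟩ := pos_of_mem_Tset ht
  obtain ⟨h₁, h₂, h₃, h₄, -, h₂₄⟩ := ht
  refine ⟨?_, ?_, ?_, ?_, tToS_snd_sq_mul_fth t h₃.ne' hD.ne' ▸ h₂₄⟩ <;>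
    simp only [tToS] <;> positivity

theorem tToS_sToT : Set.LeftInvOn tToS sToT Sset := by
  rintro ⟨a, b, c, d⟩ ⟨ha, hb, hc, hd, -⟩
  have hE : 0 < 1 + a + a * b ^ 2 * d := by positivity
  rw [tToS_eq, sToT_fst_mul_thd _ (by positivity) hb.ne', sToT_snd_mul_fth _ hc.ne']
  have hD : 1 - a / (1 + a + a * b ^ 2 * d) * (b ^ 2 * d) =
      (1 + a) / (1 + a + a * b ^ 2 * d) := by
    field_simp; ring
  have hF : 1 - a / (1 + a + a * b ^ 2 * d) - a / (1 + a + a * b ^ 2 * d) * (b ^ 2 * d) =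
      1 / (1 + a + a * b ^ 2 * d) := by
    field_simp; ring
  rw [hD, hF]
  simp only [sToT]
  ext <;> field_simp

theorem sToT_tToS : Set.LeftInvOn sToT tToS Tset := by
  intro t ht
  obtain ⟨hF, hD⟩ := pos_of_mem_Tset ht
  obtain ⟨-, -, h₃, h₄, -, -⟩ := ht
  rw [sToT_eq, tToS_denom t h₃.ne' hD.ne' hF.ne', tToS_one_add_fst t hF.ne']
  simp only [tToS]
  generalize 1 - t.1 * t.2.2.1 - t.1 * t.2.1 * t.2.2.1 * t.2.2.2 = F at hF ⊢
  generalize 1 - t.1 * t.2.1 * t.2.2.1 * t.2.2.2 = D at hD ⊢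
  ext <;> field_simp

theorem stmt19 :
    (∀ s ∈ Sset, sToT s ∈ Tset) ∧
    (∀ t ∈ Tset, tToS t ∈ Sset) ∧
    (∀ s ∈ Sset, tToS (sToT s) = s) ∧
    (∀ t ∈ Tset, sToT (tToS t) = t) :=
  ⟨sToT_mapsTo, tToS_mapsTo, tToS_sToT, sToT_tToS⟩
end
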